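/- Let ε ∈ (0, 1/3]. Let S be a real random variable with mean μ > 0 and standard deviation at most εμ/√f(ε), and let R be uniform on [1−ε, 1+ε], independent of S. Then P(SR ≤ μ − εμ) ≤ 1/4 and P(SR ≥ μ + εμ) ≤ 1/4. -/

import Mathlib

open MeasureTheory ProbabilityTheory Real

/-- The uniform probability measure on the interval `[a, b]`. -/
noncomputable def uniformIcc (a b : ℝ) : Measure ℝ :=
  (ENNReal.ofReal (b - a))⁻¹ • (MeasureTheory.volume.restrict (Set.Icc a b))

/-- The median of `2*n+1` real values: their `(n+1)`-st smallest value. -/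
noncomputable def medianOf {n : ℕ} (v : Fin (2 * n + 1) → ℝ) : ℝ :=
  (Multiset.sort (↑(List.ofFn v)) (· ≤ ·)).get ⟨n, by simp; omega⟩

/-- The nuisance factor `f(ε) = (1+ε)/((1-ε)² (1+ε-ε²))`. -/
noncomputable def nuisance (ε : ℝ) : ℝ := (1 + ε) / ((1 - ε) ^ 2 * (1 + ε - ε ^ 2))

/-!
Normalise `X = S / μ`: it has mean `1` and, since `f(ε) ≥ (1 - ε)⁻²`, variance at most
`σ² = ε² (1 - ε)²`. Given `X = x > 0`, the uniform factor `R` makes the conditional probability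
of `x R ≤ 1 - ε` at most `min 1 ((1 - ε)(1 - x) / (2 ε x))`, and that of `x R ≥ 1 + ε` at most
`(1 + ε)(x - 1) / (2 ε x)`. These are dominated by the quadratics `(x - 1 ∓ ε)² / (4 (σ² + ε²))`,
whose expectations are `(Var X + ε²) / (4 (σ² + ε²)) ≤ 1/4`, as in Cantelli's inequality.
-/

lemma uniformIcc_eq_cond (a b : ℝ) : uniformIcc a b = volume[|Set.Icc a b] := by
  rw [uniformIcc, ProbabilityTheory.cond, Real.volume_Icc]

lemma isProbabilityMeasure_uniformIcc {a b : ℝ} (hab : a < b) :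
    IsProbabilityMeasure (uniformIcc a b) := by
  rw [uniformIcc_eq_cond]
  exact cond_isProbabilityMeasure_of_finite (by simp [hab]) (by simp)

lemma uniformIcc_Iic_le {a b : ℝ} (hab : a < b) (x : ℝ) :
    uniformIcc a b (Set.Iic x) ≤ ENNReal.ofReal ((x - a) / (b - a)) := by
  rw [uniformIcc_eq_cond, cond_apply measurableSet_Icc, Real.volume_Icc,
    ENNReal.ofReal_div_of_pos (sub_pos.2 hab), ENNReal.div_eq_inv_mul]
  gcongr
  calc volume (Set.Icc a b ∩ Set.Iic x) ≤ volume (Set.Icc a x) :=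
        measure_mono fun r hr => ⟨hr.1.1, hr.2⟩
    _ = ENNReal.ofReal (x - a) := Real.volume_Icc

lemma uniformIcc_Ici_le {a b : ℝ} (hab : a < b) (x : ℝ) :
    uniformIcc a b (Set.Ici x) ≤ ENNReal.ofReal ((b - x) / (b - a)) := by
  rw [uniformIcc_eq_cond, cond_apply measurableSet_Icc, Real.volume_Icc,
    ENNReal.ofReal_div_of_pos (sub_pos.2 hab), ENNReal.div_eq_inv_mul]
  gcongr
  calc volume (Set.Icc a b ∩ Set.Ici x) ≤ volume (Set.Icc x b) :=
        measure_mono fun r hr => ⟨hr.2, hr.1.2⟩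
    _ = ENNReal.ofReal (b - x) := Real.volume_Icc

lemma integral_sq_sub_integral_add {Ω : Type*} [MeasurableSpace Ω] {μ : Measure Ω}
    [IsProbabilityMeasure μ] {X : Ω → ℝ} (hX : MemLp X 2 μ) (c : ℝ) :
    ∫ ω, (X ω - μ[X] + c) ^ 2 ∂μ = Var[X; μ] + c ^ 2 := by
  have hX1 := hX.integrable one_le_two
  have hmean : ∫ ω, (X ω - μ[X] + c) ∂μ = c := by
    rw [integral_add (f := fun ω => X ω - μ[X]) (hX1.sub (integrable_const _))
      (integrable_const c), integral_sub hX1 (integrable_const _)]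
    simp
  have hvar : Var[fun ω => X ω - μ[X] + c; μ] = Var[X; μ] := by
    rw [variance_add_const (X := fun ω => X ω - μ[X]) (hX.1.sub aestronglyMeasurable_const) c,
      variance_sub_const hX.1]
  have hshift : MemLp (fun ω => X ω - μ[X] + c) 2 μ :=
    (hX.sub (memLp_const μ[X])).add (memLp_const c)
  rw [variance_eq_sub hshift, hmean] at hvar
  rw [← hvar]
  simp

theorem ProbabilityTheory.IndepFun.measure_mem_eq_lintegral {Ω α β : Type*} [MeasurableSpace Ω]
    [MeasurableSpace α] [MeasurableSpace β] {μ : Measure Ω} [IsFiniteMeasure μ] {X : Ω → α}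
    {Y : Ω → β} (hX : Measurable X) (hY : Measurable Y) (hXY : IndepFun X Y μ)
    {E : Set (α × β)} (hE : MeasurableSet E) :
    μ {ω | (X ω, Y ω) ∈ E} = ∫⁻ ω, μ.map Y (Prod.mk (X ω) ⁻¹' E) ∂μ := by
  rw [← lintegral_map (measurable_measure_prodMk_left hE) hX, ← Measure.prod_apply hE,
    ← hXY.map_prod_eq_prod_map_map hX.aemeasurable hY.aemeasurable,
    Measure.map_apply (hX.prodMk hY) hE]
  rfl

theorem ProbabilityTheory.IndepFun.measure_mem_le_quarter {Ω β : Type*} [MeasurableSpace Ω]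
    [MeasurableSpace β] {μ : Measure Ω} [IsProbabilityMeasure μ] {X : Ω → ℝ} {Y : Ω → β}
    (hX : Measurable X) (hY : Measurable Y) (hXY : IndepFun X Y μ) (hX2 : MemLp X 2 μ)
    {E : Set (ℝ × β)} (hE : MeasurableSet E) {c σ2 : ℝ} (hvar : Var[X; μ] ≤ σ2)
    (hslice : ∀ x, μ.map Y (Prod.mk x ⁻¹' E) ≤
      ENNReal.ofReal ((x - μ[X] + c) ^ 2 / (4 * (σ2 + c ^ 2)))) :
    μ {ω | (X ω, Y ω) ∈ E} ≤ 1 / 4 := by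
  have hD : 0 ≤ 4 * (σ2 + c ^ 2) := by nlinarith [variance_nonneg X μ, sq_nonneg c]
  have hshift : MemLp (fun ω => X ω - μ[X] + c) 2 μ :=
    (hX2.sub (memLp_const μ[X])).add (memLp_const c)
  have hint : Integrable (fun ω => (X ω - μ[X] + c) ^ 2 / (4 * (σ2 + c ^ 2))) μ :=
    hshift.integrable_sq.div_const _
  calc μ {ω | (X ω, Y ω) ∈ E}
      ≤ ∫⁻ ω, ENNReal.ofReal ((X ω - μ[X] + c) ^ 2 / (4 * (σ2 + c ^ 2))) ∂μ := by
        rw [hXY.measure_mem_eq_lintegral hX hY hE]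
        exact lintegral_mono fun ω => hslice (X ω)
    _ = ENNReal.ofReal ((Var[X; μ] + c ^ 2) / (4 * (σ2 + c ^ 2))) := by
        rw [← ofReal_integral_eq_lintegral_ofReal hint (ae_of_all _ fun ω => by positivity),
          integral_div, integral_sq_sub_integral_add hX2]
    _ ≤ ENNReal.ofReal (1 / 4) := by
        refine ENNReal.ofReal_le_ofReal ?_
        rcases hD.eq_or_lt with h | h
        · simp [← h]
        · rw [div_le_iff₀ h]
          linarith
    _ = 1 / 4 := by
        rw [ENNReal.ofReal_div_of_pos four_pos, ENNReal.ofReal_one, ENNReal.ofReal_ofNat]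

section Majorants

variable {ε x : ℝ}

lemma sq_majorant_ge_one (hε0 : 0 ≤ ε) (hε1 : ε ≤ 1) (hx : (1 + ε) * x ≤ 1 - ε) :
    4 * (ε ^ 2 * (1 - ε) ^ 2 + ε ^ 2) ≤ (x - 1 - ε) ^ 2 := by
  have hgap : ε * (3 + ε) ≤ (1 + ε) * (1 + ε - x) := by nlinarith
  have hpoly : 4 * (2 - 2 * ε + ε ^ 2) * (1 + ε) ^ 2 ≤ (3 + ε) ^ 2 := by
    nlinarith [sq_nonneg (1 - ε), mul_nonneg (mul_nonneg hε0 hε0)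
      (mul_nonneg hε0 (by linarith : (0 : ℝ) ≤ 1 - ε))]
  refine le_of_mul_le_mul_right ?_ (by positivity : (0 : ℝ) < (1 + ε) ^ 2)
  nlinarith [mul_le_mul_of_nonneg_left hpoly (sq_nonneg ε),
    pow_le_pow_left₀ (by positivity) hgap 2]

lemma lower_slice_le_sq_majorant (hε0 : 0 < ε) (hε1 : ε < 1) (hx : 1 - ε ≤ (1 + ε) * x) :
    (1 - ε) * (1 - x) * (4 * (ε ^ 2 * (1 - ε) ^ 2 + ε ^ 2)) ≤ (x - 1 - ε) ^ 2 * (x * (2 * ε)) := by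
  suffices h : 2 * ε * (1 - ε) * (2 - 2 * ε + ε ^ 2) * (1 - x) ≤ x * (x - 1 - ε) ^ 2 by
    nlinarith [mul_le_mul_of_nonneg_left h (by positivity : (0 : ℝ) ≤ 2 * ε)]
  rcases le_or_gt x 1 with h | h
  -- `(x - 1 - ε)² = 4 ε (1 - x) + (1 - x - ε)²`, and `1 - x ≤ 2 ε / (1 + ε)`
  · have hdev : (1 - x) * (1 + ε) ≤ 2 * ε := by linarith
    have hx0 : 0 ≤ x := by nlinarith
    nlinarith [mul_nonneg hx0 (sq_nonneg (1 - x - ε)),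
      mul_nonneg (sub_nonneg.2 h) (mul_nonneg hε0.le (sq_nonneg (1 - ε))),
      mul_le_mul_of_nonneg_left hdev (mul_nonneg hε0.le (sub_nonneg.2 h))]
  · have hc : 0 ≤ ε * (1 - ε) * (2 - 2 * ε + ε ^ 2) := by
      have : 0 < 2 - 2 * ε + ε ^ 2 := by nlinarith
      have : 0 < 1 - ε := by linarith
      positivity
    nlinarith [mul_nonneg (by linarith : (0 : ℝ) ≤ x) (sq_nonneg (x - 1 - ε)),
      mul_nonneg hc (sub_nonneg.2 h.le)]

lemma upper_slice_le_sq_majorant (hε0 : 0 < ε) (hε1 : ε ≤ 1) (hx : 0 ≤ x) :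
    (1 + ε) * (x - 1) * (4 * (ε ^ 2 * (1 - ε) ^ 2 + ε ^ 2)) ≤ (x - 1 + ε) ^ 2 * (x * (2 * ε)) := by
  suffices h : 2 * ε * (1 + ε) * (2 - 2 * ε + ε ^ 2) * (x - 1) ≤ x * (x - 1 + ε) ^ 2 by
    nlinarith [mul_le_mul_of_nonneg_left h (by positivity : (0 : ℝ) ≤ 2 * ε)]
  have hc : (1 + ε) * (2 - 2 * ε + ε ^ 2) ≤ 2 := by
    nlinarith [mul_nonneg (mul_nonneg hε0.le hε0.le) (sub_nonneg.2 hε1)]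
  rcases le_or_gt x 1 with h | h
  · nlinarith [mul_nonneg hx (sq_nonneg (x - 1 + ε)), mul_nonneg hε0.le (mul_nonneg
      (sub_nonneg.2 h) (by nlinarith : (0 : ℝ) ≤ (1 + ε) * (2 - 2 * ε + ε ^ 2)))]
  · have hamgm : 4 * ε * (x - 1) ≤ (x - 1 + ε) ^ 2 := by nlinarith [sq_nonneg (x - 1 - ε)]
    nlinarith [mul_le_mul_of_nonneg_left hc (mul_nonneg hε0.le (sub_nonneg.2 h.le)),
      mul_le_mul_of_nonneg_right h.le (sq_nonneg (x - 1 + ε))]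

end Majorants

section Slices

variable {ε : ℝ}

lemma uniformIcc_setOf_mul_le_le (hε0 : 0 < ε) (hε1 : ε < 1) (x : ℝ) :
    uniformIcc (1 - ε) (1 + ε) {r | x * r ≤ 1 - ε} ≤
      ENNReal.ofReal ((x - 1 - ε) ^ 2 / (4 * (ε ^ 2 * (1 - ε) ^ 2 + ε ^ 2))) := by
  have hD : 0 < 4 * (ε ^ 2 * (1 - ε) ^ 2 + ε ^ 2) := by positivity
  have := isProbabilityMeasure_uniformIcc (a := 1 - ε) (b := 1 + ε) (by linarith)
  rcases le_or_gt ((1 + ε) * x) (1 - ε) with hx | hx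
  · calc _ ≤ 1 := prob_le_one
      _ ≤ _ := by
        rw [ENNReal.one_le_ofReal, one_le_div hD]
        exact sq_majorant_ge_one hε0.le hε1.le hx
  · have hx0 : 0 < x := by nlinarith
    have hset : {r | x * r ≤ 1 - ε} = Set.Iic ((1 - ε) / x) := by
      ext r
      simp [le_div_iff₀ hx0, mul_comm]
    rw [hset]
    refine (uniformIcc_Iic_le (by linarith) _).trans (ENNReal.ofReal_le_ofReal ?_)
    rw [show (1 - ε) / x - (1 - ε) = (1 - ε) * (1 - x) / x by field_simp,
      show 1 + ε - (1 - ε) = 2 * ε by ring, div_div, div_le_div_iff₀ (by positivity) hD]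
    exact lower_slice_le_sq_majorant hε0 hε1 hx.le

lemma uniformIcc_setOf_le_mul_le (hε0 : 0 < ε) (hε1 : ε ≤ 1) (x : ℝ) :
    uniformIcc (1 - ε) (1 + ε) {r | 1 + ε ≤ x * r} ≤
      ENNReal.ofReal ((x - 1 + ε) ^ 2 / (4 * (ε ^ 2 * (1 - ε) ^ 2 + ε ^ 2))) := by
  have hD : 0 < 4 * (ε ^ 2 * (1 - ε) ^ 2 + ε ^ 2) := by positivity
  rcases le_or_gt x 0 with hx | hx
  · calc _ ≤ uniformIcc (1 - ε) (1 + ε) (Set.Iic 0) := by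
          refine measure_mono fun r (hr : 1 + ε ≤ x * r) => Set.mem_Iic.2 ?_
          by_contra! h
          nlinarith [mul_nonpos_of_nonpos_of_nonneg hx h.le]
      _ ≤ ENNReal.ofReal ((0 - (1 - ε)) / (1 + ε - (1 - ε))) :=
          uniformIcc_Iic_le (by linarith) 0
      _ = 0 :=
          ENNReal.ofReal_of_nonpos (div_nonpos_of_nonpos_of_nonneg (by linarith) (by linarith))
      _ ≤ _ := zero_le
  · have hset : {r | 1 + ε ≤ x * r} = Set.Ici ((1 + ε) / x) := by
      ext r
      simp [div_le_iff₀ hx, mul_comm]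
    rw [hset]
    refine (uniformIcc_Ici_le (by linarith) _).trans (ENNReal.ofReal_le_ofReal ?_)
    rw [show 1 + ε - (1 + ε) / x = (1 + ε) * (x - 1) / x by field_simp,
      show 1 + ε - (1 - ε) = 2 * ε by ring, div_div, div_le_div_iff₀ (by positivity) hD]
    exact upper_slice_le_sq_majorant hε0 hε1 hx.le

end Slices

lemma inv_sq_one_sub_le_nuisance {ε : ℝ} (hε0 : 0 ≤ ε) (hε1 : ε < 1) :
    ((1 - ε) ^ 2)⁻¹ ≤ nuisance ε := by
  have h1 : 0 < 1 - ε := by linarith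
  have h2 : 0 < 1 + ε - ε ^ 2 := by nlinarith
  rw [nuisance, inv_eq_one_div, div_le_div_iff₀ (by positivity) (by positivity)]
  nlinarith [mul_nonneg (sq_nonneg (1 - ε)) (sq_nonneg ε)]

lemma sq_div_sqrt_nuisance_le {ε : ℝ} (hε0 : 0 ≤ ε) (hε1 : ε < 1) (a : ℝ) :
    (a / √(nuisance ε)) ^ 2 ≤ a ^ 2 * (1 - ε) ^ 2 := by
  have hpos : 0 < (1 - ε) ^ 2 := pow_pos (by linarith) 2
  have hf := inv_sq_one_sub_le_nuisance hε0 hε1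
  rw [div_pow, Real.sq_sqrt ((inv_pos.2 hpos).trans_le hf).le, div_eq_mul_inv]
  gcongr
  simpa using inv_anti₀ (inv_pos.2 hpos) hf

section Tails

variable {Ω : Type*} [MeasurableSpace Ω] {μ : Measure Ω} [IsProbabilityMeasure μ] {X R : Ω → ℝ}
  {ε : ℝ}

theorem measure_mul_le_one_sub_le_quarter (hε0 : 0 < ε) (hε1 : ε < 1) (hX : Measurable X)
    (hR : Measurable R) (hX2 : MemLp X 2 μ) (hmean : μ[X] = 1)
    (hvar : Var[X; μ] ≤ ε ^ 2 * (1 - ε) ^ 2) (hlaw : μ.map R = uniformIcc (1 - ε) (1 + ε))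
    (hXR : IndepFun X R μ) :
    μ {ω | X ω * R ω ≤ 1 - ε} ≤ 1 / 4 :=
  hXR.measure_mem_le_quarter hX hR hX2 (E := {p | p.1 * p.2 ≤ 1 - ε})
    (measurableSet_le (by fun_prop) (by fun_prop)) (c := -ε) hvar fun x => by
      rw [hlaw, hmean, neg_sq, ← sub_eq_add_neg]
      exact uniformIcc_setOf_mul_le_le hε0 hε1 x

theorem measure_one_add_le_mul_le_quarter (hε0 : 0 < ε) (hε1 : ε ≤ 1) (hX : Measurable X)
    (hR : Measurable R) (hX2 : MemLp X 2 μ) (hmean : μ[X] = 1)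
    (hvar : Var[X; μ] ≤ ε ^ 2 * (1 - ε) ^ 2) (hlaw : μ.map R = uniformIcc (1 - ε) (1 + ε))
    (hXR : IndepFun X R μ) :
    μ {ω | 1 + ε ≤ X ω * R ω} ≤ 1 / 4 :=
  hXR.measure_mem_le_quarter hX hR hX2 (E := {p | 1 + ε ≤ p.1 * p.2})
    (measurableSet_le (by fun_prop) (by fun_prop)) (c := ε) hvar fun x => by
      rw [hlaw, hmean]
      exact uniformIcc_setOf_le_mul_le hε0 hε1 x

end Tails

theorem smoothed_tail_bounds {Ω : Type*} [MeasureSpace Ω]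
    [IsProbabilityMeasure (ℙ : Measure Ω)]
    (ε μ : ℝ) (hε : ε ∈ Set.Ioc (0 : ℝ) (1 / 3)) (hμ : 0 < μ)
    (S R : Ω → ℝ) (hSm : Measurable S) (hRm : Measurable R)
    (hS2 : MemLp S 2 ℙ)
    (hmean : ∫ ω, S ω ∂ℙ = μ)
    (hsd : Real.sqrt (variance S ℙ) ≤ ε * μ / Real.sqrt (nuisance ε))
    (hR : Measure.map R ℙ = uniformIcc (1 - ε) (1 + ε))
    (hindep : IndepFun S R ℙ) :
    ℙ {ω | S ω * R ω ≤ μ - ε * μ} ≤ 1 / 4 ∧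
      ℙ {ω | μ + ε * μ ≤ S ω * R ω} ≤ 1 / 4 := by
  obtain ⟨hε0, hε⟩ := hε
  have hSvar : Var[S; ℙ] ≤ (ε * μ) ^ 2 * (1 - ε) ^ 2 :=
    ((Real.sqrt_le_left (by positivity)).1 hsd).trans
      (sq_div_sqrt_nuisance_le hε0.le (by linarith) _)
  set X : Ω → ℝ := fun ω => μ⁻¹ * S ω with hXdef
  have hXvar : Var[X; ℙ] ≤ ε ^ 2 * (1 - ε) ^ 2 := by
    rw [hXdef, variance_const_mul]
    calc μ⁻¹ ^ 2 * Var[S; ℙ] ≤ μ⁻¹ ^ 2 * ((ε * μ) ^ 2 * (1 - ε) ^ 2) := by gcongr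
      _ = ε ^ 2 * (1 - ε) ^ 2 := by field_simp
  have hXmean : ∫ ω, X ω ∂ℙ = 1 := by
    rw [hXdef, integral_const_mul, hmean, inv_mul_cancel₀ hμ.ne']
  have hXR : IndepFun X R ℙ := hindep.comp (measurable_const_mul _) measurable_id
  have hlow : ∀ ω, S ω * R ω ≤ μ - ε * μ ↔ X ω * R ω ≤ 1 - ε := fun ω => by
    rw [hXdef, mul_assoc, inv_mul_le_iff₀ hμ, mul_one_sub, mul_comm μ ε]
  have hup : ∀ ω, μ + ε * μ ≤ S ω * R ω ↔ 1 + ε ≤ X ω * R ω := fun ω => by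
    rw [hXdef, mul_assoc, le_inv_mul_iff₀ hμ, mul_one_add, mul_comm μ ε]
  simp_rw [hlow, hup]
  exact ⟨measure_mul_le_one_sub_le_quarter hε0 (by linarith) (hSm.const_mul _) hRm
      (hS2.const_mul _) hXmean hXvar hR hXR,
    measure_one_add_le_mul_le_quarter hε0 (by linarith) (hSm.const_mul _) hRm
      (hS2.const_mul _) hXmean hXvar hR hXR⟩
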